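/- arXiv:2505.10680 — 13 statements merged into one kernel-verified Lean document; each statement's English description precedes it below -/
import Mathlib

section
/- For every 2D string M of size m×n over a finite alphabet, δ(M) ≤ γ(M). More precisely, for every attractor Γ of M and all 1 ≤ k₁ ≤ m, 1 ≤ k₂ ≤ n, it holds that P_M(k₁,k₂) ≤ k₁·k₂·|Γ|. -/
/-!
Statement 0: For every 2D string `M` of size `m × n`, `δ(M) ≤ γ(M)`.
More precisely, for every attractor `Γ` of `M` and all `1 ≤ k₁ ≤ m`, `1 ≤ k₂ ≤ n`,
`P_M(k₁,k₂) ≤ k₁·k₂·|Γ|`.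
All indexing is 0-based: a 2D string of size `m × n` is a function
`M : ℕ → ℕ → α` whose relevant values are on `[0,m) × [0,n)`.
-/

/-- The `k₁ × k₂` factor of the 2D string `M` with top-left corner `(i, j)` (0-based). -/
def factorAt {α : Type*} (M : ℕ → ℕ → α) (k₁ k₂ i j : ℕ) : Fin k₁ → Fin k₂ → α :=
  fun a b => M (i + a) (j + b)

/-- `P_M(k₁,k₂)`: the number of distinct `k₁ × k₂` factors of the `m × n` 2D string `M`. -/
def numFactors {α : Type*} [DecidableEq α] (M : ℕ → ℕ → α) (m n k₁ k₂ : ℕ) : ℕ :=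
  ((Finset.range (m - k₁ + 1) ×ˢ Finset.range (n - k₂ + 1)).image
    (fun p => factorAt M k₁ k₂ p.1 p.2)).card

/-- `Γ` is an attractor for the `m × n` 2D string `M`: every factor of `M` has an
occurrence containing a position of `Γ`. -/
def IsAttractor {α : Type*} (M : ℕ → ℕ → α) (m n : ℕ) (Γ : Finset (ℕ × ℕ)) : Prop :=
  (∀ q ∈ Γ, q.1 < m ∧ q.2 < n) ∧
  ∀ k₁ k₂ i j, 1 ≤ k₁ → 1 ≤ k₂ → i + k₁ ≤ m → j + k₂ ≤ n →
    ∃ i' j', i' + k₁ ≤ m ∧ j' + k₂ ≤ n ∧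
      (∀ a b, a < k₁ → b < k₂ → M (i' + a) (j' + b) = M (i + a) (j + b)) ∧
      ∃ q ∈ Γ, i' ≤ q.1 ∧ q.1 < i' + k₁ ∧ j' ≤ q.2 ∧ q.2 < j' + k₂

/-- `γ(M)`: the size of a smallest attractor for the `m × n` 2D string `M`. -/
noncomputable def gammaMeasure {α : Type*} (M : ℕ → ℕ → α) (m n : ℕ) : ℕ :=
  sInf {c | ∃ Γ : Finset (ℕ × ℕ), IsAttractor M m n Γ ∧ Γ.card = c}

/-- `δ(M) = max{ P_M(k₁,k₂)/(k₁·k₂) : 1 ≤ k₁ ≤ m, 1 ≤ k₂ ≤ n }`. -/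
def deltaMeasure {α : Type*} [DecidableEq α] (M : ℕ → ℕ → α) (m n : ℕ) : ℚ≥0 :=
  ((Finset.Icc 1 m) ×ˢ (Finset.Icc 1 n)).sup
    (fun p => (numFactors M m n p.1 p.2 : ℚ≥0) / ((p.1 * p.2 : ℕ) : ℚ≥0))


lemma keyCount {α : Type*} [DecidableEq α] (m n : ℕ) (M : ℕ → ℕ → α)
    (Γ : Finset (ℕ × ℕ)) (hΓ : IsAttractor M m n Γ)
    (k₁ k₂ : ℕ) (h1 : 1 ≤ k₁) (h1m : k₁ ≤ m) (h2 : 1 ≤ k₂) (h2n : k₂ ≤ n) :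
    numFactors M m n k₁ k₂ ≤ k₁ * k₂ * Γ.card := by
  have key : numFactors M m n k₁ k₂ ≤ (Γ ×ˢ (Finset.range k₁ ×ˢ Finset.range k₂)).card := by
    apply Finset.card_le_card_of_surjOn
      (fun x : (ℕ × ℕ) × ℕ × ℕ => factorAt M k₁ k₂ (x.1.1 - x.2.1) (x.1.2 - x.2.2))
    intro F hF
    simp only [Finset.coe_image, Set.mem_image, Finset.mem_coe, Finset.mem_product,
      Finset.mem_range] at hF
    obtain ⟨⟨i, j⟩, hij, rfl⟩ := hF
    simp only [Finset.mem_product, Finset.mem_range] at hij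
    have hi : i + k₁ ≤ m := by omega
    have hj : j + k₂ ≤ n := by omega
    obtain ⟨i', j', hi', hj', heq, q, hq, hq1, hq2, hq3, hq4⟩ :=
      hΓ.2 k₁ k₂ i j h1 h2 hi hj
    refine ⟨⟨q, (q.1 - i', q.2 - j')⟩, ?_, ?_⟩
    · simp only [Set.mem_prod, Finset.mem_coe, Finset.mem_product, Finset.mem_range]
      exact ⟨hq, by omega, by omega⟩
    · have e1 : q.1 - (q.1 - i') = i' := by omega
      have e2 : q.2 - (q.2 - j') = j' := by omega
      simp only [e1, e2]
      funext a b
      exact heq a b a.isLt b.isLt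
  calc numFactors M m n k₁ k₂ ≤ _ := key
    _ = k₁ * k₂ * Γ.card := by
        simp [Finset.card_product]; ring

lemma fullGridAttractor {α : Type*} (m n : ℕ) (M : ℕ → ℕ → α) :
    IsAttractor M m n (Finset.range m ×ˢ Finset.range n) := by
  constructor
  · intro q hq; simpa [Finset.mem_product] using hq
  · intro k₁ k₂ i j h1 h2 hi hj
    exact ⟨i, j, hi, hj, fun a b _ _ => rfl,
      ⟨(i, j), by simp [Finset.mem_product]; omega, by omega, by omega, by omega, by omega⟩⟩

theorem statement0 {α : Type*} [DecidableEq α] (m n : ℕ) (M : ℕ → ℕ → α) :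
    (∀ Γ : Finset (ℕ × ℕ), IsAttractor M m n Γ →
      ∀ k₁ k₂, 1 ≤ k₁ → k₁ ≤ m → 1 ≤ k₂ → k₂ ≤ n →
        numFactors M m n k₁ k₂ ≤ k₁ * k₂ * Γ.card) ∧
    deltaMeasure M m n ≤ (gammaMeasure M m n : ℚ≥0) := by
  have main : ∀ Γ : Finset (ℕ × ℕ), IsAttractor M m n Γ →
      ∀ k₁ k₂, 1 ≤ k₁ → k₁ ≤ m → 1 ≤ k₂ → k₂ ≤ n →
        numFactors M m n k₁ k₂ ≤ k₁ * k₂ * Γ.card :=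
    fun Γ hΓ k₁ k₂ a b c d => keyCount m n M Γ hΓ k₁ k₂ a b c d
  refine ⟨main, ?_⟩
  have hne : {c | ∃ Γ : Finset (ℕ × ℕ), IsAttractor M m n Γ ∧ Γ.card = c}.Nonempty :=
    ⟨_, _, fullGridAttractor m n M, rfl⟩
  obtain ⟨Γ, hΓ, hcard⟩ := Nat.sInf_mem hne
  rw [deltaMeasure]
  apply Finset.sup_le
  rintro ⟨k₁, k₂⟩ hk
  simp only [Finset.mem_product, Finset.mem_Icc] at hk
  have hkk : (0 : ℚ≥0) < ((k₁ * k₂ : ℕ) : ℚ≥0) := by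
    have : 0 < k₁ * k₂ := Nat.mul_pos hk.1.1 hk.2.1
    exact_mod_cast this
  rw [div_le_iff₀ hkk]
  have h := main Γ hΓ k₁ k₂ hk.1.1 hk.1.2 hk.2.1 hk.2.2
  have : (numFactors M m n k₁ k₂ : ℚ≥0) ≤ ((k₁ * k₂ * Γ.card : ℕ) : ℚ≥0) := by
    exact_mod_cast h
  calc (numFactors M m n k₁ k₂ : ℚ≥0) ≤ ((k₁ * k₂ * Γ.card : ℕ) : ℚ≥0) := this
    _ = (gammaMeasure M m n : ℚ≥0) * ((k₁ * k₂ : ℕ) : ℚ≥0) := by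
        rw [gammaMeasure, ← hcard]; push_cast; ring
end

section
/- Let m,n ≥ 2 and let M be the m×n binary 2D string with M[i][j] = 1 if i = j ≤ min(m,n) and M[i][j] = 0 otherwise. Then (1) P_M(k₁,k₂) ≤ k₁ + k₂ for all 1 ≤ k₁ ≤ m, 1 ≤ k₂ ≤ n, hence δ(M) ≤ 2; and (2) every attractor of M has cardinality at least min(m,n), hence γ(M) ≥ min(m,n). -/
lemma numFactors_diag_le (m n k₁ k₂ : ℕ) (hk₁ : 1 ≤ k₁) (hk₂ : 1 ≤ k₂) :
    numFactors (fun i j => decide (i = j)) m n k₁ k₂ ≤ k₁ + k₂ := by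
  classical
  unfold numFactors
  set F : ℕ → (Fin k₁ → Fin k₂ → Bool) := fun t =>
    if t < k₂ then (fun a b => decide ((a : ℕ) + t = (b : ℕ)))
    else if t < k₁ + k₂ - 1 then (fun a b => decide ((b : ℕ) + (t - k₂ + 1) = (a : ℕ)))
    else fun _ _ => false with hF
  set e : ℕ × ℕ → ℕ := fun p =>
    if p.2 ≤ p.1 then (if p.1 - p.2 < k₂ then p.1 - p.2 else k₁ + k₂ - 1)
    else (if p.2 - p.1 < k₁ then k₂ + (p.2 - p.1) - 1 else k₁ + k₂ - 1) with he
  have hfe : ∀ p : ℕ × ℕ,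
      factorAt (fun i j => decide (i = j)) k₁ k₂ p.1 p.2 = F (e p) := by
    rintro ⟨i, j⟩
    funext a b
    have ha := a.isLt
    have hb := b.isLt
    simp only [factorAt, hF, he]
    by_cases h1 : j ≤ i
    · by_cases h2 : i - j < k₂
      · simp only [h1, h2, if_true]
        simp only [decide_eq_decide]
        omega
      · have h3 : ¬ (k₁ + k₂ - 1 < k₂) := by omega
        have h4 : ¬ (k₁ + k₂ - 1 < k₁ + k₂ - 1) := by omega
        simp only [h1, h2, if_true, if_false, h3, h4]
        simp only [decide_eq_false_iff_not]
        omega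
    · by_cases h2 : j - i < k₁
      · have h3 : ¬ (k₂ + (j - i) - 1 < k₂) := by omega
        have h4 : k₂ + (j - i) - 1 < k₁ + k₂ - 1 := by omega
        simp only [h1, h2, if_true, if_false, h3, h4]
        simp only [decide_eq_decide]
        omega
      · have h3 : ¬ (k₁ + k₂ - 1 < k₂) := by omega
        have h4 : ¬ (k₁ + k₂ - 1 < k₁ + k₂ - 1) := by omega
        simp only [h1, h2, if_false, h3, h4]
        simp only [decide_eq_false_iff_not]
        omega
  calc ((Finset.range (m - k₁ + 1) ×ˢ Finset.range (n - k₂ + 1)).image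
          (fun p => factorAt (fun i j => decide (i = j)) k₁ k₂ p.1 p.2)).card
      = (((Finset.range (m - k₁ + 1) ×ˢ Finset.range (n - k₂ + 1)).image e).image F).card := by
        rw [Finset.image_image]
        exact congrArg Finset.card (Finset.image_congr (fun p _ => hfe p))
    _ ≤ ((Finset.range (m - k₁ + 1) ×ˢ Finset.range (n - k₂ + 1)).image e).card :=
        Finset.card_image_le
    _ ≤ (Finset.range (k₁ + k₂)).card := by
        apply Finset.card_le_card
        intro t ht
        simp only [Finset.mem_image] at ht
        obtain ⟨p, _, rfl⟩ := ht
        simp only [Finset.mem_range, he]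
        split_ifs <;> omega
    _ = k₁ + k₂ := Finset.card_range _

theorem statement1 (m n : ℕ) (hm : 2 ≤ m) (hn : 2 ≤ n)
    (M : ℕ → ℕ → Bool) (hM : ∀ i j, M i j = decide (i = j)) :
    (∀ k₁ k₂, 1 ≤ k₁ → k₁ ≤ m → 1 ≤ k₂ → k₂ ≤ n →
      numFactors M m n k₁ k₂ ≤ k₁ + k₂) ∧
    deltaMeasure M m n ≤ 2 ∧
    (∀ Γ : Finset (ℕ × ℕ), IsAttractor M m n Γ → min m n ≤ Γ.card) ∧
    min m n ≤ gammaMeasure M m n := by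
  have hMeq : M = fun i j => decide (i = j) := by funext i j; exact hM i j
  subst hMeq
  have hP : ∀ k₁ k₂, 1 ≤ k₁ → k₁ ≤ m → 1 ≤ k₂ → k₂ ≤ n →
      numFactors (fun i j => decide (i = j)) m n k₁ k₂ ≤ k₁ + k₂ :=
    fun k₁ k₂ h1 _ h3 _ => numFactors_diag_le m n k₁ k₂ h1 h3
  have hAtt : ∀ Γ : Finset (ℕ × ℕ),
      IsAttractor (fun i j => decide (i = j)) m n Γ → min m n ≤ Γ.card := by
    rintro Γ ⟨hΓ1, hΓ2⟩
    have key : ∀ t, t < min m n → ∃ q ∈ Γ, q.1 = t := by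
      intro t ht
      obtain ⟨i', j', hi', hj', hmatch, q, hq, hq1, hq2, hq3, hq4⟩ :=
        hΓ2 1 n t 0 le_rfl (by omega) (by omega) (by omega)
      have h1 := hmatch 0 t (by omega) (by omega)
      simp only [decide_eq_decide] at h1
      exact ⟨q, hq, by omega⟩
    have hsub : Finset.range (min m n) ⊆ Γ.image Prod.fst := by
      intro t ht
      simp only [Finset.mem_range] at ht
      obtain ⟨q, hq, hq1⟩ := key t ht
      exact Finset.mem_image.2 ⟨q, hq, hq1⟩
    calc min m n = (Finset.range (min m n)).card := (Finset.card_range _).symm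
      _ ≤ (Γ.image Prod.fst).card := Finset.card_le_card hsub
      _ ≤ Γ.card := Finset.card_image_le
  refine ⟨hP, ?_, hAtt, ?_⟩
  · unfold deltaMeasure
    apply Finset.sup_le
    rintro ⟨k₁, k₂⟩ hp
    simp only [Finset.mem_product, Finset.mem_Icc] at hp
    obtain ⟨⟨h1, h2⟩, h3, h4⟩ := hp
    have hpos : (0 : ℚ≥0) < ((k₁ * k₂ : ℕ) : ℚ≥0) := by
      exact_mod_cast Nat.pos_of_ne_zero (by positivity)
    rw [div_le_iff₀ hpos]
    have hnat : numFactors (fun i j => decide (i = j)) m n k₁ k₂ ≤ 2 * (k₁ * k₂) := by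
      have := hP k₁ k₂ h1 h2 h3 h4
      nlinarith
    calc (numFactors (fun i j => decide (i = j)) m n k₁ k₂ : ℚ≥0)
        ≤ ((2 * (k₁ * k₂) : ℕ) : ℚ≥0) := by exact_mod_cast hnat
      _ = 2 * ((k₁ * k₂ : ℕ) : ℚ≥0) := by push_cast; ring
  · have hattr : IsAttractor (fun i j => decide (i = j)) m n
        (Finset.range m ×ˢ Finset.range n) := by
      constructor
      · rintro ⟨x, y⟩ hq
        simpa [Finset.mem_product] using hq
      · intro k₁ k₂ i j hk₁ hk₂ hi hj
        refine ⟨i, j, hi, hj, fun a b _ _ => rfl, ⟨i, j⟩, ?_, le_rfl, by omega, le_rfl, by omega⟩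
        simp only [Finset.mem_product, Finset.mem_range]
        omega
    have hne : {c | ∃ Γ : Finset (ℕ × ℕ),
        IsAttractor (fun i j => decide (i = j)) m n Γ ∧ Γ.card = c}.Nonempty :=
      ⟨_, _, hattr, rfl⟩
    obtain ⟨Γ, hΓ, hc⟩ := Nat.sInf_mem hne
    rw [gammaMeasure, ← hc]
    exact hAtt Γ hΓ
end

section
/- For every n ≥ 2, let Z_n be the n×n 2D string over {0} in which every entry is 0. There exists a 2D RLSLP of size 5 generating Z_n (namely with rules X→⊖ⁿY, Y→⦶ⁿZ, Z→0), hence g_rl(Z_n) ≤ 5; while every 2D SLP G generating Z_n satisfies n² < 2^{|G|}, hence g(Z_n) ≥ 2·log₂ n. In particular g_rl = o(g) on this family. -/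
/-!
Statement 4: For `n ≥ 2`, let `Z_n` be the all-zero `n × n` 2D string over the
one-letter alphabet `{0}`.  There is a 2D RLSLP of size 5 generating `Z_n`
(rules `X → ⊖ⁿY`, `Y → ⦶ⁿZ`, `Z → 0`), hence `g_rl(Z_n) ≤ 5`; while every 2D SLP
`G` generating `Z_n` satisfies `n² < 2^{|G|}`, hence `g(Z_n) ≥ 2·log₂ n`.
-/

/-- A rule of a 2D SLP. -/
inductive Rule2D (α : Type*) (V : ℕ) : Type _ where
  | term : α → Rule2D α V
  | horiz : Fin V → Fin V → Rule2D α V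
  | vert : Fin V → Fin V → Rule2D α V

def Rule2D.refs {α : Type*} {V : ℕ} : Rule2D α V → List (Fin V)
  | .term _ => []
  | .horiz B C => [B, C]
  | .vert B C => [B, C]

def Rule2D.size {α : Type*} {V : ℕ} : Rule2D α V → ℕ
  | .term _ => 1
  | _ => 2

def ConsistentAt {α : Type*} {V : ℕ} (rows cols : Fin V → ℕ)
    (ent : Fin V → ℕ → ℕ → α) (A : Fin V) : Rule2D α V → Prop
  | .term a => rows A = 1 ∧ cols A = 1 ∧ ent A 0 0 = a
  | .horiz B C => rows A = rows B ∧ rows A = rows C ∧ cols A = cols B + cols C ∧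
      (∀ i j, i < rows B → j < cols B → ent A i j = ent B i j) ∧
      (∀ i j, i < rows C → j < cols C → ent A i (cols B + j) = ent C i j)
  | .vert B C => cols A = cols B ∧ cols A = cols C ∧ rows A = rows B + rows C ∧
      (∀ i j, i < rows B → j < cols B → ent A i j = ent B i j) ∧
      (∀ i j, i < rows C → j < cols C → ent A (rows B + i) j = ent C i j)

/-- A 2D straight-line program over the alphabet `α`. -/
structure SLP2D (α : Type*) where
  V : ℕ
  rule : Fin V → Rule2D α V
  start : Fin V
  rows : Fin V → ℕ
  cols : Fin V → ℕ
  ent : Fin V → ℕ → ℕ → α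
  acyclic : ∀ A : Fin V, ∀ B ∈ (rule A).refs, B < A
  consistent : ∀ A : Fin V, ConsistentAt rows cols ent A (rule A)

def SLP2D.size {α : Type*} (G : SLP2D α) : ℕ := ∑ A : Fin G.V, (G.rule A).size

def SLP2D.Generates {α : Type*} (G : SLP2D α) (m n : ℕ) (M : ℕ → ℕ → α) : Prop :=
  G.rows G.start = m ∧ G.cols G.start = n ∧
  ∀ i j, i < m → j < n → G.ent G.start i j = M i j

/-- A rule of a 2D RLSLP: additionally run-length rules `⦶^k` and `⊖^k`, `k > 1`. -/
inductive RuleRL (α : Type*) (V : ℕ) : Type _ where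
  | term : α → RuleRL α V
  | horiz : Fin V → Fin V → RuleRL α V
  | vert : Fin V → Fin V → RuleRL α V
  | hrep : ℕ → Fin V → RuleRL α V
  | vrep : ℕ → Fin V → RuleRL α V

def RuleRL.refs {α : Type*} {V : ℕ} : RuleRL α V → List (Fin V)
  | .term _ => []
  | .horiz B C => [B, C]
  | .vert B C => [B, C]
  | .hrep _ B => [B]
  | .vrep _ B => [B]

def RuleRL.size {α : Type*} {V : ℕ} : RuleRL α V → ℕ
  | .term _ => 1
  | _ => 2

def ConsistentRLAt {α : Type*} {V : ℕ} (rows cols : Fin V → ℕ)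
    (ent : Fin V → ℕ → ℕ → α) (A : Fin V) : RuleRL α V → Prop
  | .term a => rows A = 1 ∧ cols A = 1 ∧ ent A 0 0 = a
  | .horiz B C => rows A = rows B ∧ rows A = rows C ∧ cols A = cols B + cols C ∧
      (∀ i j, i < rows B → j < cols B → ent A i j = ent B i j) ∧
      (∀ i j, i < rows C → j < cols C → ent A i (cols B + j) = ent C i j)
  | .vert B C => cols A = cols B ∧ cols A = cols C ∧ rows A = rows B + rows C ∧
      (∀ i j, i < rows B → j < cols B → ent A i j = ent B i j) ∧
      (∀ i j, i < rows C → j < cols C → ent A (rows B + i) j = ent C i j)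
  | .hrep k B => 2 ≤ k ∧ rows A = rows B ∧ cols A = k * cols B ∧
      (∀ q i j, q < k → i < rows B → j < cols B → ent A i (q * cols B + j) = ent B i j)
  | .vrep k B => 2 ≤ k ∧ cols A = cols B ∧ rows A = k * rows B ∧
      (∀ q i j, q < k → i < rows B → j < cols B → ent A (q * rows B + i) j = ent B i j)

/-- A 2D run-length straight-line program over the alphabet `α`. -/
structure RLSLP2D (α : Type*) where
  V : ℕ
  rule : Fin V → RuleRL α V
  start : Fin V
  rows : Fin V → ℕ
  cols : Fin V → ℕ
  ent : Fin V → ℕ → ℕ → α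
  acyclic : ∀ A : Fin V, ∀ B ∈ (rule A).refs, B < A
  consistent : ∀ A : Fin V, ConsistentRLAt rows cols ent A (rule A)

def RLSLP2D.size {α : Type*} (G : RLSLP2D α) : ℕ := ∑ A : Fin G.V, (G.rule A).size

def RLSLP2D.Generates {α : Type*} (G : RLSLP2D α) (m n : ℕ) (M : ℕ → ℕ → α) : Prop :=
  G.rows G.start = m ∧ G.cols G.start = n ∧
  ∀ i j, i < m → j < n → G.ent G.start i j = M i j

lemma slp_area_le {α : Type*} (G : SLP2D α) :
    ∀ A : Fin G.V, G.rows A * G.cols A ≤ 2 ^ (A : ℕ) := by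
  suffices h : ∀ k, ∀ A : Fin G.V, (A : ℕ) < k → G.rows A * G.cols A ≤ 2 ^ (A : ℕ) by
    intro A; exact h ((A : ℕ) + 1) A (Nat.lt_succ_self _)
  intro k
  induction k with
  | zero => intro A h; omega
  | succ k ihk =>
    intro A hAk
    have ih : ∀ B : Fin G.V, (B : ℕ) < (A : ℕ) → G.rows B * G.cols B ≤ 2 ^ (B : ℕ) :=
      fun B hB => ihk B (by omega)
    have hc := G.consistent A
    have hac := G.acyclic A
    cases hr : G.rule A with
    | term a =>
      rw [hr] at hc
      obtain ⟨h1, h2, _⟩ := hc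
      rw [h1, h2]; simpa using Nat.one_le_two_pow
    | horiz B C =>
      rw [hr] at hc hac
      obtain ⟨h1, h2, h3, _⟩ := hc
      have hB : (B : ℕ) < A := hac B (by simp [Rule2D.refs])
      have hC : (C : ℕ) < A := hac C (by simp [Rule2D.refs])
      have iB := ih B hB
      have iC := ih C hC
      have hA1 : 1 ≤ (A : ℕ) := Nat.one_le_iff_ne_zero.mpr (by omega)
      calc G.rows A * G.cols A = G.rows B * G.cols B + G.rows C * G.cols C := by
            rw [h3, Nat.mul_add]
            congr 1
            · rw [h1]
            · rw [h2]
        _ ≤ 2 ^ (B : ℕ) + 2 ^ (C : ℕ) := Nat.add_le_add iB iC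
        _ ≤ 2 ^ ((A : ℕ) - 1) + 2 ^ ((A : ℕ) - 1) :=
            Nat.add_le_add (Nat.pow_le_pow_right (by norm_num) (by omega))
              (Nat.pow_le_pow_right (by norm_num) (by omega))
        _ = 2 ^ ((A : ℕ) - 1 + 1) := by ring
        _ = 2 ^ (A : ℕ) := by rw [Nat.sub_add_cancel hA1]
    | vert B C =>
      rw [hr] at hc hac
      obtain ⟨h1, h2, h3, _⟩ := hc
      have hB : (B : ℕ) < A := hac B (by simp [Rule2D.refs])
      have hC : (C : ℕ) < A := hac C (by simp [Rule2D.refs])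
      have iB := ih B hB
      have iC := ih C hC
      have hA1 : 1 ≤ (A : ℕ) := Nat.one_le_iff_ne_zero.mpr (by omega)
      calc G.rows A * G.cols A = G.rows B * G.cols B + G.rows C * G.cols C := by
            rw [h3, Nat.add_mul, ← h1, ← h2]
        _ ≤ 2 ^ (B : ℕ) + 2 ^ (C : ℕ) := Nat.add_le_add iB iC
        _ ≤ 2 ^ ((A : ℕ) - 1) + 2 ^ ((A : ℕ) - 1) :=
            Nat.add_le_add (Nat.pow_le_pow_right (by norm_num) (by omega))
              (Nat.pow_le_pow_right (by norm_num) (by omega))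
        _ = 2 ^ ((A : ℕ) - 1 + 1) := by ring
        _ = 2 ^ (A : ℕ) := by rw [Nat.sub_add_cancel hA1]

lemma slp_V_le_size {α : Type*} (G : SLP2D α) : G.V ≤ G.size := by
  have : ∀ A : Fin G.V, 1 ≤ (G.rule A).size := by
    intro A; cases G.rule A <;> simp [Rule2D.size]
  calc G.V = ∑ _A : Fin G.V, 1 := by simp
    _ ≤ G.size := Finset.sum_le_sum fun A _ => this A

theorem statement4 (n : ℕ) (hn : 2 ≤ n) :
    (∃ G : RLSLP2D (Fin 1),
      G.Generates n n (fun _ _ => (0 : Fin 1)) ∧ G.size = 5) ∧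
    (∀ G : SLP2D (Fin 1), G.Generates n n (fun _ _ => (0 : Fin 1)) →
      n * n < 2 ^ G.size ∧ 2 * Nat.log 2 n ≤ G.size) := by
  constructor
  · refine ⟨⟨3, ![RuleRL.term 0, RuleRL.hrep n 0, RuleRL.vrep n 1], 2,
      ![1, 1, n], ![1, n, n], fun _ _ _ => 0, ?_, ?_⟩, ?_, ?_⟩
    · intro A B hB
      fin_cases A <;> simp_all [RuleRL.refs] <;> omega
    · intro A
      fin_cases A <;> simp [ConsistentRLAt] <;> omega
    · exact ⟨rfl, rfl, fun i j _ _ => rfl⟩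
    · show (∑ A : Fin 3, _) = 5
      rw [Fin.sum_univ_three]
      rfl
  · intro G hG
    obtain ⟨hr, hc, _⟩ := hG
    have h1 := slp_area_le G G.start
    rw [hr, hc] at h1
    have h2 : (G.start : ℕ) < G.size := lt_of_lt_of_le G.start.isLt (slp_V_le_size G)
    have hlt : n * n < 2 ^ G.size :=
      lt_of_le_of_lt h1 (Nat.pow_lt_pow_right (by norm_num) h2)
    refine ⟨hlt, ?_⟩
    have hlog : 2 ^ (2 * Nat.log 2 n) ≤ n * n := by
      rw [two_mul, pow_add]
      exact Nat.mul_le_mul (Nat.pow_log_le_self 2 (by omega)) (Nat.pow_log_le_self 2 (by omega))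
    have := lt_of_le_of_lt hlog hlt
    exact le_of_lt ((Nat.pow_lt_pow_iff_right (by norm_num)).mp this)
end

section
/- For every n ≥ 1 and every 2D RLSLP G generating the identity matrix I_n, it holds that n < 2^{|G|}; hence g_rl(I_n) ≥ log₂ n, and so, combined with b(I_n) = O(1), there is an infinite family of square 2D strings of size N with g_rl = Ω(b·log N). -/
/-- `g_rl(M)`: the minimum size of a 2D RLSLP generating `M`. -/
noncomputable def grlMeasure {α : Type*} (M : ℕ → ℕ → α) (m n : ℕ) : ℕ :=
  sInf {s | ∃ G : RLSLP2D α, G.Generates m n M ∧ G.size = s}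

/-- The identity matrix (over `{0,1}`, with `true` as `1`), 0-based. -/
def idMat : ℕ → ℕ → Bool := fun i j => decide (i = j)

lemma idMat_eq_true {a b : ℕ} : idMat a b = true ↔ a = b := decide_eq_true_iff

lemma idMat_comm (a b : ℕ) : idMat a b = idMat b a := by
  simp only [idMat, eq_comm]

/-- The number of diagonal cells `(t, t)` in the box `[r, r + R) × [c, c + C)`. -/
def diagLen (r c R C : ℕ) : ℕ := min (r + R) (c + C) - max r c

lemma diagLen_comm (r c R C : ℕ) : diagLen r c R C = diagLen c r C R := by
  simp only [diagLen, min_comm, max_comm]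

def IsIdBlock (f : ℕ → ℕ → Bool) (r c R C : ℕ) : Prop :=
  ∀ i j, i < R → j < C → f i j = idMat (r + i) (c + j)

lemma diagLen_eq_zero_of_hrep {f g : ℕ → ℕ → Bool} {r c R C k : ℕ} (hk : 2 ≤ k)
    (hrep : ∀ q i j, q < k → i < R → j < C → f i (q * C + j) = g i j)
    (hf : IsIdBlock f r c R (k * C)) : diagLen r c R (k * C) = 0 := by
  -- a `1` in any copy reappears in the first two copies, i.e. twice in one row of `idMat`
  by_contra hne
  have hi : max r c - r < R := by unfold diagLen at hne; omega
  have hj : max r c - c < k * C := by unfold diagLen at hne; omega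
  have hC : 0 < C := Nat.pos_of_mul_pos_left (by omega : 0 < k * C)
  set i := max r c - r
  set j := max r c - c
  have hjC : j % C < C := Nat.mod_lt j hC
  have hg : g i (j % C) = true := by
    rw [← hrep (j / C) i (j % C) ((Nat.div_lt_iff_lt_mul hC).2 hj) hi hjC, Nat.div_add_mod',
      hf i j hi hj, idMat_eq_true]
    omega
  have h0 := hf i (0 * C + j % C) hi (by nlinarith)
  have h1 := hf i (1 * C + j % C) hi (by nlinarith)
  rw [hrep 0 i _ (by omega) hi hjC, hg, eq_comm, idMat_eq_true] at h0
  rw [hrep 1 i _ (by omega) hi hjC, hg, eq_comm, idMat_eq_true] at h1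
  omega

lemma diagLen_eq_zero_of_vrep {f g : ℕ → ℕ → Bool} {r c R C k : ℕ} (hk : 2 ≤ k)
    (hrep : ∀ q i j, q < k → i < R → j < C → f (q * R + i) j = g i j)
    (hf : IsIdBlock f r c (k * R) C) : diagLen r c (k * R) C = 0 := by
  rw [diagLen_comm]
  exact diagLen_eq_zero_of_hrep (f := fun i j => f j i) (g := fun i j => g j i) hk
    (fun q i j hq hi hj => hrep q j i hq hj hi)
    (fun i j hi hj => (hf j i hj hi).trans (idMat_comm _ _))

lemma diagLen_lt_of_consistentRLAt {V : ℕ} {rows cols : Fin V → ℕ}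
    {ent : Fin V → ℕ → ℕ → Bool} {A : Fin V} {rule : RuleRL Bool V} {m r c : ℕ} (hA : ConsistentRLAt rows cols ent A rule)
    (hrefs : ∀ B ∈ rule.refs, ∀ r c, IsIdBlock (ent B) r c (rows B) (cols B) →
      diagLen r c (rows B) (cols B) < 2 ^ m)
    (hblock : IsIdBlock (ent A) r c (rows A) (cols A)) :
    diagLen r c (rows A) (cols A) < 2 ^ (m + 1) := by
  have h2m : 2 ^ (m + 1) = 2 ^ m + 2 ^ m := by ring
  cases rule with
  | term a =>
    obtain ⟨hR, -, -⟩ := hA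
    have : diagLen r c (rows A) (cols A) ≤ 1 := by unfold diagLen; omega
    have := Nat.one_le_two_pow (n := m)
    omega
  | horiz B C =>
    obtain ⟨hRB, hRC, hC, hB, hCe⟩ := hA
    have hlB := hrefs B (by simp [RuleRL.refs]) r c fun i j hi hj => by
      rw [← hB i j hi hj, hblock i j (by omega) (by omega)]
    have hlC := hrefs C (by simp [RuleRL.refs]) r (c + cols B) fun i j hi hj => by
      rw [← hCe i j hi hj, hblock i _ (by omega) (by omega), add_assoc]
    have : diagLen r c (rows A) (cols A) ≤
        diagLen r c (rows B) (cols B) + diagLen r (c + cols B) (rows C) (cols C) := by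
      unfold diagLen; omega
    omega
  | vert B C =>
    obtain ⟨hCB, hCC, hR, hB, hCe⟩ := hA
    have hlB := hrefs B (by simp [RuleRL.refs]) r c fun i j hi hj => by
      rw [← hB i j hi hj, hblock i j (by omega) (by omega)]
    have hlC := hrefs C (by simp [RuleRL.refs]) (r + rows B) c fun i j hi hj => by
      rw [← hCe i j hi hj, hblock _ j (by omega) (by omega), add_assoc]
    have : diagLen r c (rows A) (cols A) ≤
        diagLen r c (rows B) (cols B) + diagLen (r + rows B) c (rows C) (cols C) := by
      unfold diagLen; omega
    omega
  | hrep k B =>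
    obtain ⟨hk, hR, hC, hE⟩ := hA
    rw [hR, hC] at hblock ⊢
    rw [diagLen_eq_zero_of_hrep hk hE hblock]
    positivity
  | vrep k B =>
    obtain ⟨hk, hC, hR, hE⟩ := hA
    rw [hR, hC] at hblock ⊢
    rw [diagLen_eq_zero_of_vrep hk hE hblock]
    positivity

namespace RLSLP2D

lemma V_le_size {α : Type*} (G : RLSLP2D α) : G.V ≤ G.size := by
  have h : ∀ A : Fin G.V, 1 ≤ (G.rule A).size := fun A => by
    cases G.rule A <;> simp [RuleRL.size]
  simpa [size] using Finset.sum_le_sum fun A (_ : A ∈ Finset.univ) => h A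

lemma diagLen_lt_two_pow (G : RLSLP2D Bool) (A : Fin G.V) {r c : ℕ}
    (hA : IsIdBlock (G.ent A) r c (G.rows A) (G.cols A)) :
    diagLen r c (G.rows A) (G.cols A) < 2 ^ (A.val + 1) := by
  induction A using WellFoundedLT.induction generalizing r c with
  | _ A ih =>
    refine diagLen_lt_of_consistentRLAt (G.consistent A) (fun B hB r c hBblock => ?_) hA
    have hBA : B < A := G.acyclic A B hB
    exact (ih B hBA hBblock).trans_le (Nat.pow_le_pow_right two_pos hBA)

theorem lt_two_pow_size_of_generates_idMat {G : RLSLP2D Bool} {n : ℕ}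
    (h : G.Generates n n idMat) : n < 2 ^ G.size := by
  obtain ⟨hR, hC, hE⟩ := h
  have hdiag := G.diagLen_lt_two_pow G.start (r := 0) (c := 0) fun i j hi hj => by
    simpa using hE i j (hR ▸ hi) (hC ▸ hj)
  rw [hR, hC] at hdiag
  calc n = diagLen 0 0 n n := by simp [diagLen]
    _ < 2 ^ (G.start.val + 1) := hdiag
    _ ≤ 2 ^ G.size := Nat.pow_le_pow_right two_pos (G.start.isLt.trans_le G.V_le_size)

end RLSLP2D

def RuleRL.map {α : Type*} {V W : ℕ} (f : Fin V → Fin W) : RuleRL α V → RuleRL α W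
  | .term a => .term a
  | .horiz B C => .horiz (f B) (f C)
  | .vert B C => .vert (f B) (f C)
  | .hrep k B => .hrep k (f B)
  | .vrep k B => .vrep k (f B)

lemma RuleRL.refs_map {α : Type*} {V W : ℕ} (f : Fin V → Fin W) (r : RuleRL α V) :
    (r.map f).refs = r.refs.map f := by
  cases r <;> rfl

lemma ConsistentRLAt.map {α : Type*} {V W : ℕ} {f : Fin V → Fin W} {rows cols : Fin W → ℕ}
    {ent : Fin W → ℕ → ℕ → α} {A : Fin V} {r : RuleRL α V}
    (h : ConsistentRLAt (rows ∘ f) (cols ∘ f) (ent ∘ f) A r) :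
    ConsistentRLAt rows cols ent (f A) (r.map f) := by
  cases r <;> exact h

namespace RLSLP2D

variable {α : Type*}

def single (a : α) : RLSLP2D α where
  V := 1
  rule _ := .term a
  start := 0
  rows _ := 1
  cols _ := 1
  ent _ _ _ := a
  acyclic _ _ h := by simp [RuleRL.refs] at h
  consistent _ := ⟨rfl, rfl, rfl⟩

lemma generates_single (M : ℕ → ℕ → α) : (single (M 0 0)).Generates 1 1 M :=
  ⟨rfl, rfl, fun i j hi hj => by
    obtain rfl : i = 0 := by omega
    obtain rfl : j = 0 := by omega
    rfl⟩

section join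

variable (G H : RLSLP2D α)

def inl (A : Fin G.V) : Fin (G.V + H.V + 1) := (Fin.castAdd H.V A).castSucc

def inr (B : Fin H.V) : Fin (G.V + H.V + 1) := (Fin.natAdd G.V B).castSucc

lemma inl_lt_last (A : Fin G.V) : inl G H A < Fin.last _ := Fin.castSucc_lt_last _

lemma inr_lt_last (B : Fin H.V) : inr G H B < Fin.last _ := Fin.castSucc_lt_last _

def join (top : RuleRL α (G.V + H.V + 1)) (R C : ℕ) (M : ℕ → ℕ → α)
    (htop : ∀ B ∈ top.refs, B < Fin.last _)
    (hcons : ConsistentRLAt (Fin.snoc (Fin.append G.rows H.rows) R)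
      (Fin.snoc (Fin.append G.cols H.cols) C) (Fin.snoc (Fin.append G.ent H.ent) M)
      (Fin.last _) top) : RLSLP2D α where
  V := G.V + H.V + 1
  rule := Fin.snoc (Fin.append (fun A => (G.rule A).map (inl G H))
    (fun B => (H.rule B).map (inr G H))) top
  start := Fin.last _
  rows := Fin.snoc (Fin.append G.rows H.rows) R
  cols := Fin.snoc (Fin.append G.cols H.cols) C
  ent := Fin.snoc (Fin.append G.ent H.ent) M
  acyclic A := by
    induction A using Fin.lastCases with
    | last => simpa using htop
    | cast A =>
      induction A using Fin.addCases with
      | left A =>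
        simp only [Fin.snoc_castSucc, Fin.append_left, RuleRL.refs_map, List.mem_map]
        rintro _ ⟨B, hB, rfl⟩
        exact Fin.castSucc_lt_castSucc_iff.2 (Fin.lt_def.2 (G.acyclic A B hB))
      | right A =>
        simp only [Fin.snoc_castSucc, Fin.append_right, RuleRL.refs_map, List.mem_map]
        rintro _ ⟨B, hB, rfl⟩
        exact Fin.castSucc_lt_castSucc_iff.2 (Fin.lt_def.2 (by simpa using H.acyclic A B hB))
  consistent A := by
    induction A using Fin.lastCases with
    | last => simpa using hcons
    | cast A =>
      induction A using Fin.addCases with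
      | left A =>
        simp only [Fin.snoc_castSucc, Fin.append_left]
        refine ConsistentRLAt.map (f := inl G H) ?_
        simpa only [Function.comp_def, inl, Fin.snoc_castSucc, Fin.append_left]
          using G.consistent A
      | right A =>
        simp only [Fin.snoc_castSucc, Fin.append_right]
        refine ConsistentRLAt.map (f := inr G H) ?_
        simpa only [Function.comp_def, inr, Fin.snoc_castSucc, Fin.append_right]
          using H.consistent A

end join

variable {G H : RLSLP2D α} {M : ℕ → ℕ → α}

theorem Generates.exists_hconcat {R C₁ C₂ : ℕ} (hG : G.Generates R C₁ M)
    (hH : H.Generates R C₂ fun i j => M i (C₁ + j)) :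
    ∃ K : RLSLP2D α, K.Generates R (C₁ + C₂) M := by
  obtain ⟨hGR, hGC, hGE⟩ := hG
  obtain ⟨hHR, hHC, hHE⟩ := hH
  refine ⟨G.join H (.horiz (inl G H G.start) (inr G H H.start)) R (C₁ + C₂) M
    (by simp [RuleRL.refs, inl_lt_last, inr_lt_last]) ?_, by simp [join, Generates]⟩
  simp only [ConsistentRLAt, inl, inr, Fin.snoc_castSucc, Fin.snoc_last, Fin.append_left,
    Fin.append_right, hGR, hGC, hHR, hHC, true_and]
  exact ⟨fun i j hi hj => (hGE i j hi hj).symm, fun i j hi hj => (hHE i j hi hj).symm⟩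

theorem Generates.exists_vconcat {R₁ R₂ C : ℕ} (hG : G.Generates R₁ C M)
    (hH : H.Generates R₂ C fun i j => M (R₁ + i) j) :
    ∃ K : RLSLP2D α, K.Generates (R₁ + R₂) C M := by
  obtain ⟨hGR, hGC, hGE⟩ := hG
  obtain ⟨hHR, hHC, hHE⟩ := hH
  refine ⟨G.join H (.vert (inl G H G.start) (inr G H H.start)) (R₁ + R₂) C M
    (by simp [RuleRL.refs, inl_lt_last, inr_lt_last]) ?_, by simp [join, Generates]⟩
  simp only [ConsistentRLAt, inl, inr, Fin.snoc_castSucc, Fin.snoc_last, Fin.append_left,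
    Fin.append_right, hGR, hGC, hHR, hHC, true_and]
  exact ⟨fun i j hi hj => (hGE i j hi hj).symm, fun i j hi hj => (hHE i j hi hj).symm⟩

theorem exists_generates_of_rows_eq_one {n : ℕ} (hn : 1 ≤ n) (M : ℕ → ℕ → α) :
    ∃ G : RLSLP2D α, G.Generates 1 n M := by
  induction n, hn using Nat.le_induction generalizing M with
  | base => exact ⟨_, generates_single M⟩
  | succ n _ ih =>
    obtain ⟨G, hG⟩ := ih M
    exact hG.exists_hconcat (generates_single fun i j => M i (n + j))

theorem exists_generates {m n : ℕ} (hm : 1 ≤ m) (hn : 1 ≤ n) (M : ℕ → ℕ → α) :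
    ∃ G : RLSLP2D α, G.Generates m n M := by
  induction m, hm using Nat.le_induction generalizing M with
  | base => exact exists_generates_of_rows_eq_one hn M
  | succ m _ ih =>
    obtain ⟨G, hG⟩ := ih M
    obtain ⟨H, hH⟩ := exists_generates_of_rows_eq_one hn fun i j => M (m + i) j
    exact hG.exists_vconcat hH

end RLSLP2D

theorem statement7 (n : ℕ) (hn : 1 ≤ n) :
    (∀ G : RLSLP2D Bool, G.Generates n n idMat →
      n < 2 ^ G.size ∧ Nat.log 2 n ≤ G.size) ∧
    Nat.log 2 n ≤ grlMeasure (α := Bool) idMat n n := by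
  have hbound (G : RLSLP2D Bool) (hG : G.Generates n n idMat) :
      n < 2 ^ G.size ∧ Nat.log 2 n ≤ G.size :=
    have h := RLSLP2D.lt_two_pow_size_of_generates_idMat hG
    ⟨h, (Nat.log_lt_of_lt_pow (by omega) h).le⟩
  refine ⟨hbound, ?_⟩
  obtain ⟨G, hG⟩ := RLSLP2D.exists_generates hn hn idMat
  obtain ⟨G', hG', hsize⟩ :=
    Nat.sInf_mem (s := {s | ∃ G : RLSLP2D Bool, G.Generates n n idMat ∧ G.size = s})
      ⟨G.size, G, hG, rfl⟩
  rw [grlMeasure, ← hsize]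
  exact (hbound G' hG').2
end

section
/- Let k ≥ 1 and let D be a binary string of length n ≥ k such that no binary string of length k occurs more than once as a substring of D. Then every k×k factor of B_D occurs at most once: for all 1 ≤ i,u ≤ n−k+1 and 1 ≤ j,v ≤ n−k+1, if B_D[i..i+k−1][j..j+k−1] = B_D[u..u+k−1][v..v+k−1] then i = u and j = v. Consequently every square factor of B_D of side at least k occurs exactly once in B_D. -/
/-!
Statement 9: Let `k ≥ 1` and let `D` be a binary string of length `n ≥ k` in which
no binary string of length `k` occurs more than once.  Then every `k × k` factor of
`B_D` (where `B_D[i][j] = ⟨D[i], D[j]⟩`) occurs at most once; consequently every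
square factor of `B_D` of side at least `k` occurs at most (hence exactly) once.
(0-based indexing: a factor with 1-based top-left corner `(i,j)`, `1 ≤ i,j ≤ n−k+1`,
corresponds to a 0-based top-left corner `(i,j)` with `i + k ≤ n`, `j + k ≤ n`.)
-/

theorem statement9 (k n : ℕ) (hk : 1 ≤ k) (hkn : k ≤ n) (D : ℕ → Bool)
    (hD : ∀ i u, i + k ≤ n → u + k ≤ n →
      (∀ t, t < k → D (i + t) = D (u + t)) → i = u) :
    (∀ i j u v, i + k ≤ n → j + k ≤ n → u + k ≤ n → v + k ≤ n →
      (∀ a b, a < k → b < k →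
        ((D (i + a), D (j + b)) : Bool × Bool) = (D (u + a), D (v + b))) →
      i = u ∧ j = v) ∧
    (∀ s, k ≤ s → ∀ i j u v, i + s ≤ n → j + s ≤ n → u + s ≤ n → v + s ≤ n →
      (∀ a b, a < s → b < s →
        ((D (i + a), D (j + b)) : Bool × Bool) = (D (u + a), D (v + b))) →
      i = u ∧ j = v) := by
  have key : ∀ i j u v, i + k ≤ n → j + k ≤ n → u + k ≤ n → v + k ≤ n →
      (∀ a b, a < k → b < k →
        ((D (i + a), D (j + b)) : Bool × Bool) = (D (u + a), D (v + b))) →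
      i = u ∧ j = v := by
    intro i j u v hi hj hu hv h
    constructor
    · exact hD i u hi hu (fun t ht => (Prod.mk.injEq _ _ _ _ ▸ h t 0 ht hk).1)
    · exact hD j v hj hv (fun t ht => (Prod.mk.injEq _ _ _ _ ▸ h 0 t hk ht).2)
  refine ⟨key, fun s hs i j u v hi hj hu hv h => ?_⟩
  exact key i j u v (le_trans (by omega) hi) (le_trans (by omega) hj)
    (le_trans (by omega) hu) (le_trans (by omega) hv)
    (fun a b ha hb => h a b (lt_of_lt_of_le ha hs) (lt_of_lt_of_le hb hs))
end

section
/- Let k ≥ 2 and let D be a binary de Bruijn sequence of order k, of length n = 2^k + k − 1. Let F be a finite family of square regions of B_D (each region given by its top-left position and a side length, lying inside the n×n grid) whose union covers all n² positions, and such that every region in F of side s ≥ 2 has another occurrence, i.e., there is an equal s×s submatrix of B_D whose top-left position differs from that of the region. Then |F| ≥ n²/(k−1)². -/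
/-!
A square factor of `B_D` of side `s ≥ k` determines its position: its first row reads a
length-`k` window of `D` at the row offset and its first column one at the column offset, and
each such window occurs only once in `D`. So every phrase with another occurrence has side at
most `k - 1`, and covering the `n²` cells needs at least `n² / (k - 1)²` phrases.
-/

open Finset

theorem eq_of_window_eq {α : Type*} {k n : ℕ} {D : ℕ → α}
    (hD : ∀ w : ℕ → α, ∃! i, i + k ≤ n ∧ ∀ t, t < k → D (i + t) = w t)
    {i j : ℕ} (hi : i + k ≤ n) (hj : j + k ≤ n) (h : ∀ t, t < k → D (i + t) = D (j + t)) :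
    i = j :=
  (hD fun t => D (j + t)).unique ⟨hi, h⟩ ⟨hj, fun _ _ => rfl⟩

theorem side_lt_of_square_factor_eq {α : Type*} {k n : ℕ} {D : ℕ → α}
    (hD : ∀ w : ℕ → α, ∃! i, i + k ≤ n ∧ ∀ t, t < k → D (i + t) = w t)
    {r c r' c' s : ℕ} (hr : r + s ≤ n) (hc : c + s ≤ n) (hr' : r' + s ≤ n) (hc' : c' + s ≤ n)
    (hne : (r', c') ≠ (r, c))
    (heq : ∀ a b, a < s → b < s → (D (r' + a), D (c' + b)) = (D (r + a), D (c + b))) :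
    s < k := by
  by_contra! hks
  have hrow : r' = r := eq_of_window_eq hD (by omega) (by omega) fun t ht =>
    congrArg Prod.fst (heq t 0 (by omega) (by omega))
  have hcol : c' = c := eq_of_window_eq hD (by omega) (by omega) fun t ht =>
    congrArg Prod.snd (heq 0 t (by omega) (by omega))
  exact hne (by rw [hrow, hcol])

def squareCells (q : (ℕ × ℕ) × ℕ) : Finset (ℕ × ℕ) :=
  Ico q.1.1 (q.1.1 + q.2) ×ˢ Ico q.1.2 (q.1.2 + q.2)

theorem card_squareCells (q : (ℕ × ℕ) × ℕ) : #(squareCells q) = q.2 ^ 2 := by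
  simp [squareCells, sq]

theorem sq_le_sum_sq_of_covers {n : ℕ} {F : Finset ((ℕ × ℕ) × ℕ)}
    (hcov : ∀ i j, i < n → j < n → ∃ q ∈ F,
      q.1.1 ≤ i ∧ i < q.1.1 + q.2 ∧ q.1.2 ≤ j ∧ j < q.1.2 + q.2) :
    n ^ 2 ≤ ∑ q ∈ F, q.2 ^ 2 := by
  have hsub : range n ×ˢ range n ⊆ F.biUnion squareCells := by
    rintro ⟨i, j⟩ hij
    simp only [mem_product, mem_range] at hij
    obtain ⟨q, hq, hi, hi', hj, hj'⟩ := hcov i j hij.1 hij.2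
    exact mem_biUnion.2 ⟨q, hq, mem_product.2 ⟨mem_Ico.2 ⟨hi, hi'⟩, mem_Ico.2 ⟨hj, hj'⟩⟩⟩
  calc n ^ 2 = #(range n ×ˢ range n) := by simp [sq]
    _ ≤ #(F.biUnion squareCells) := card_le_card hsub
    _ ≤ ∑ q ∈ F, #(squareCells q) := card_biUnion_le
    _ = ∑ q ∈ F, q.2 ^ 2 := by simp only [card_squareCells]

theorem statement10_general (k : ℕ) (hk : 2 ≤ k) (n : ℕ)
    (D : ℕ → Bool)
    (hD : ∀ w : ℕ → Bool, ∃! i, i + k ≤ n ∧ ∀ t, t < k → D (i + t) = w t)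
    (F : Finset ((ℕ × ℕ) × ℕ))
    (hin : ∀ q ∈ F, 1 ≤ q.2 ∧ q.1.1 + q.2 ≤ n ∧ q.1.2 + q.2 ≤ n)
    (hcov : ∀ i j, i < n → j < n → ∃ q ∈ F,
      q.1.1 ≤ i ∧ i < q.1.1 + q.2 ∧ q.1.2 ≤ j ∧ j < q.1.2 + q.2)
    (hsrc : ∀ q ∈ F, 2 ≤ q.2 → ∃ r' c', (r', c') ≠ q.1 ∧
      r' + q.2 ≤ n ∧ c' + q.2 ≤ n ∧
      ∀ a b, a < q.2 → b < q.2 →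
        ((D (r' + a), D (c' + b)) : Bool × Bool) = (D (q.1.1 + a), D (q.1.2 + b))) :
    ((n ^ 2 : ℕ) : ℚ) / (((k - 1) ^ 2 : ℕ) : ℚ) ≤ (F.card : ℚ) := by
  have hside : ∀ q ∈ F, q.2 ≤ k - 1 := fun q hq => by
    by_contra! hks
    obtain ⟨-, hr, hc⟩ := hin q hq
    obtain ⟨r', c', hne, hr', hc', heq⟩ := hsrc q hq (by omega)
    have := side_lt_of_square_factor_eq hD hr hc hr' hc' hne heq
    omega
  have hcount : n ^ 2 ≤ #F * (k - 1) ^ 2 :=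
    (sq_le_sum_sq_of_covers hcov).trans <| by
      simpa using sum_le_card_nsmul F (·.2 ^ 2) _ fun q hq => Nat.pow_le_pow_left (hside q hq) 2
  have hpos : (0 : ℚ) < ((k - 1) ^ 2 : ℕ) := by
    have : 0 < k - 1 := by omega
    positivity
  rw [div_le_iff₀ hpos]
  exact_mod_cast hcount

theorem statement10 (k : ℕ) (hk : 2 ≤ k) (n : ℕ) (hn : n = 2 ^ k + k - 1)
    (D : ℕ → Bool)
    (hD : ∀ w : ℕ → Bool, ∃! i, i + k ≤ n ∧ ∀ t, t < k → D (i + t) = w t)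
    (F : Finset ((ℕ × ℕ) × ℕ))
    (hin : ∀ q ∈ F, 1 ≤ q.2 ∧ q.1.1 + q.2 ≤ n ∧ q.1.2 + q.2 ≤ n)
    (hcov : ∀ i j, i < n → j < n → ∃ q ∈ F,
      q.1.1 ≤ i ∧ i < q.1.1 + q.2 ∧ q.1.2 ≤ j ∧ j < q.1.2 + q.2)
    (hsrc : ∀ q ∈ F, 2 ≤ q.2 → ∃ r' c', (r', c') ≠ q.1 ∧
      r' + q.2 ≤ n ∧ c' + q.2 ≤ n ∧
      ∀ a b, a < q.2 → b < q.2 →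
        ((D (r' + a), D (c' + b)) : Bool × Bool) = (D (q.1.1 + a), D (q.1.2 + b))) :
    ((n ^ 2 : ℕ) : ℚ) / (((k - 1) ^ 2 : ℕ) : ℚ) ≤ (F.card : ℚ) :=
  statement10_general k hk n D hD F hin hcov hsrc
end

section
/- For every k ≥ 1, the 2^k columns of E_k are pairwise distinct; hence P_{E_k}(k,1) = 2^k and δ(E_k) ≥ 2^k/k. Moreover γ(E_k) ≥ 2^k, since each of the 2^k distinct k×1 factors of E_k occurs exactly once and these occurrences are pairwise disjoint. -/
/-- The 2D string `E_k` (independent of `k` as a total function):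
`E i j` is the `i`-th binary digit of `j`. -/
def Emat : ℕ → ℕ → Bool := fun i j => Nat.testBit j i

theorem statement11 (k : ℕ) (hk : 1 ≤ k) :
    (∀ j j', j < 2 ^ k → j' < 2 ^ k →
      (∀ i, i < k → Emat i j = Emat i j') → j = j') ∧
    numFactors Emat k (2 ^ k) k 1 = 2 ^ k ∧
    ((2 ^ k : ℕ) : ℚ≥0) / ((k : ℕ) : ℚ≥0) ≤ deltaMeasure Emat k (2 ^ k) ∧
    (∀ Γ : Finset (ℕ × ℕ), IsAttractor Emat k (2 ^ k) Γ → 2 ^ k ≤ Γ.card) := by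
  have hdist : ∀ j j', j < 2 ^ k → j' < 2 ^ k →
      (∀ i, i < k → Emat i j = Emat i j') → j = j' := by
    intro j j' hj hj' h
    apply Nat.eq_of_testBit_eq
    intro i
    rcases lt_or_ge i k with hi | hi
    · exact h i hi
    · rw [Nat.testBit_eq_false_of_lt (lt_of_lt_of_le hj (Nat.pow_le_pow_right (by norm_num) hi)),
        Nat.testBit_eq_false_of_lt (lt_of_lt_of_le hj' (Nat.pow_le_pow_right (by norm_num) hi))]
  have hnum : numFactors Emat k (2 ^ k) k 1 = 2 ^ k := by
    unfold numFactors
    rw [Finset.card_image_of_injOn, Finset.card_product, Finset.card_range, Finset.card_range]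
    · have h1 : 1 ≤ 2 ^ k := Nat.one_le_two_pow
      simp only [Nat.sub_self]
      omega
    · rintro ⟨a, b⟩ hab ⟨c, d⟩ hcd heq
      have h1 : 1 ≤ 2 ^ k := Nat.one_le_two_pow
      simp only [Finset.coe_product, Set.mem_prod, Finset.coe_range, Set.mem_Iio,
        Nat.sub_self] at hab hcd
      have ha : a = 0 := Nat.lt_one_iff.mp hab.1
      have hc : c = 0 := Nat.lt_one_iff.mp hcd.1
      subst ha; subst hc
      have hbd : b = d := by
        apply hdist b d (by omega) (by omega)
        intro i hi
        have := congrFun (congrFun heq ⟨i, hi⟩) ⟨0, by norm_num⟩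
        simpa [factorAt] using this
      simp [hbd]
  refine ⟨hdist, hnum, ?_, ?_⟩
  · have hmem : ((k, 1) : ℕ × ℕ) ∈ (Finset.Icc 1 k) ×ˢ (Finset.Icc 1 (2 ^ k)) := by
      simp [Finset.mem_product, hk, Nat.one_le_two_pow]
    have := Finset.le_sup (f := fun p : ℕ × ℕ =>
      (numFactors Emat k (2 ^ k) p.1 p.2 : ℚ≥0) / ((p.1 * p.2 : ℕ) : ℚ≥0)) hmem
    simpa [deltaMeasure, hnum] using this
  · intro Γ hΓ
    have hsub : Finset.range (2 ^ k) ⊆ Γ.image Prod.snd := by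
      intro j hj
      rw [Finset.mem_range] at hj
      obtain ⟨i', j', hi'k, hj'n, hmatch, q, hqΓ, _, _, hq1, hq2⟩ :=
        hΓ.2 k 1 0 j hk le_rfl (by simp) (by omega)
      have hi'0 : i' = 0 := by omega
      have hj'j : j' = j := by
        apply hdist j' j (by omega) hj
        intro i hi
        have := hmatch i 0 hi Nat.one_pos
        simpa [hi'0] using this
      have hq : q.2 = j := by omega
      exact Finset.mem_image.mpr ⟨q, hqΓ, hq⟩
    calc 2 ^ k = (Finset.range (2 ^ k)).card := (Finset.card_range _).symm
      _ ≤ (Γ.image Prod.snd).card := Finset.card_le_card hsub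
      _ ≤ Γ.card := Finset.card_image_le
end

section
/- For every k ≥ 1, the k×k factors E_k[1..k][j..j+k−1], for j = 1, …, 2^k − k + 1, are pairwise distinct; hence P_{E_k}(k,k) ≥ 2^k − k + 1 and δ_□(E_k) ≥ (2^k − k + 1)/k². -/
/-- `δ_□(M) = max{ P_M(k,k)/k² : 1 ≤ k ≤ min(m,n) }`. -/
def deltaSqMeasure {α : Type*} [DecidableEq α] (M : ℕ → ℕ → α) (m n : ℕ) : ℚ≥0 :=
  (Finset.Icc 1 (min m n)).sup
    (fun t => (numFactors M m n t t : ℚ≥0) / ((t * t : ℕ) : ℚ≥0))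

theorem eq_of_testBit_eq_of_lt_two_pow {k x y : ℕ} (hx : x < 2 ^ k) (hy : y < 2 ^ k)
    (h : ∀ i < k, x.testBit i = y.testBit i) : x = y := by
  refine Nat.eq_of_testBit_eq fun i => ?_
  rcases lt_or_ge i k with hi | hi
  · exact h i hi
  · have hpow : 2 ^ k ≤ 2 ^ i := Nat.pow_le_pow_right two_pos hi
    rw [Nat.testBit_lt_two_pow (hx.trans_le hpow), Nat.testBit_lt_two_pow (hy.trans_le hpow)]

section Factors

variable {α : Type*} [DecidableEq α] (M : ℕ → ℕ → α)

theorem numFactors_full_height {m n k : ℕ}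
    (h : Set.InjOn (factorAt M m k 0) (Finset.range (n - k + 1))) :
    numFactors M m n m k = n - k + 1 := by
  have hrow : Finset.range (m - m + 1) = {0} := by simp
  rw [numFactors, hrow, Finset.singleton_product, Finset.map_eq_image, Finset.image_image]
  exact (Finset.card_image_of_injOn h).trans (Finset.card_range _)

theorem numFactors_div_sq_le_deltaSqMeasure {m n t : ℕ} (ht : 1 ≤ t) (hm : t ≤ m)
    (hn : t ≤ n) :
    (numFactors M m n t t : ℚ≥0) / (t : ℚ≥0) ^ 2 ≤ deltaSqMeasure M m n := by
  have hmem : t ∈ Finset.Icc 1 (min m n) := Finset.mem_Icc.mpr ⟨ht, le_min hm hn⟩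
  refine le_of_eq_of_le ?_ (Finset.le_sup hmem)
  push_cast
  ring

end Factors

theorem statement13 (k : ℕ) (hk : 1 ≤ k) :
    (∀ j j', j + k ≤ 2 ^ k → j' + k ≤ 2 ^ k →
      (∀ a b, a < k → b < k → Emat a (j + b) = Emat a (j' + b)) → j = j') ∧
    2 ^ k - k + 1 ≤ numFactors Emat k (2 ^ k) k k ∧
    ((2 ^ k - k + 1 : ℕ) : ℚ≥0) / (((k : ℕ) : ℚ≥0) ^ 2) ≤
      deltaSqMeasure Emat k (2 ^ k) := by
  have hk2 : k < 2 ^ k := Nat.lt_two_pow_self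
  have hinj : ∀ j j', j + k ≤ 2 ^ k → j' + k ≤ 2 ^ k →
      (∀ a b, a < k → b < k → Emat a (j + b) = Emat a (j' + b)) → j = j' :=
    fun j j' hj hj' h => eq_of_testBit_eq_of_lt_two_pow (k := k) (by omega) (by omega)
      fun a ha => by simpa [Emat] using h a 0 ha hk
  have hcount : numFactors Emat k (2 ^ k) k k = 2 ^ k - k + 1 := by
    refine numFactors_full_height Emat fun j hj j' hj' hjj' => ?_
    simp only [Finset.coe_range, Set.mem_Iio] at hj hj'
    refine hinj j j' (by omega) (by omega) fun a b ha hb => ?_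
    simpa [factorAt] using congrFun (congrFun hjj' ⟨a, ha⟩) ⟨b, hb⟩
  refine ⟨hinj, hcount.ge, ?_⟩
  simpa [hcount] using numFactors_div_sq_le_deltaSqMeasure Emat hk le_rfl hk2.le
end

section
/- Let k ≥ 1, let D be a binary de Bruijn sequence of order k of length n = 2^k + k − 1, and let B_D be the corresponding n×n 2D string. Then B_D contains exactly (n−k+1)² distinct k×k factors, one for each position; hence P_{B_D}(k,k) = (n−k+1)² and δ_□(B_D) ≥ (n−k+1)²/k². -/
theorem statement14 (k : ℕ) (hk : 1 ≤ k) (n : ℕ) (hn : n = 2 ^ k + k - 1)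
    (D : ℕ → Bool)
    (hD : ∀ w : ℕ → Bool, ∃! i, i + k ≤ n ∧ ∀ t, t < k → D (i + t) = w t) :
    numFactors (fun i j => ((D i, D j) : Bool × Bool)) n n k k = (n - k + 1) ^ 2 ∧
    (((n - k + 1) ^ 2 : ℕ) : ℚ≥0) / (((k : ℕ) : ℚ≥0) ^ 2) ≤
      deltaSqMeasure (fun i j => ((D i, D j) : Bool × Bool)) n n := by
  have hkn : k ≤ n := by
    subst hn
    have : 1 ≤ 2 ^ k := Nat.one_le_two_pow
    omega
  have huniq : ∀ i i', i + k ≤ n → i' + k ≤ n →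
      (∀ t, t < k → D (i + t) = D (i' + t)) → i = i' := by
    intro i i' hi hi' h
    obtain ⟨x, -, hx⟩ := hD (fun t => D (i + t))
    have h1 := hx i ⟨hi, fun t ht => rfl⟩
    have h2 := hx i' ⟨hi', fun t ht => (h t ht).symm⟩
    omega
  have hinj : Set.InjOn
      (fun p : ℕ × ℕ => factorAt (fun i j => ((D i, D j) : Bool × Bool)) k k p.1 p.2)
      ((Finset.range (n - k + 1) ×ˢ Finset.range (n - k + 1)) : Finset (ℕ × ℕ)) := by
    rintro ⟨i, j⟩ hij ⟨i', j'⟩ hij' heq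
    simp only [Finset.coe_product, Set.mem_prod, Finset.mem_coe, Finset.mem_range]
      at hij hij'
    have key : ∀ a b : Fin k, D (i + a) = D (i' + a) ∧ D (j + b) = D (j' + b) := by
      intro a b
      have := congrFun (congrFun heq a) b
      simpa [factorAt, Prod.ext_iff] using this
    have hi := huniq i i' (by omega) (by omega)
      (fun t ht => (key ⟨t, ht⟩ ⟨0, hk⟩).1)
    have hj := huniq j j' (by omega) (by omega)
      (fun t ht => (key ⟨0, hk⟩ ⟨t, ht⟩).2)
    simp [hi, hj]
  have hnum : numFactors (fun i j => ((D i, D j) : Bool × Bool)) n n k k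
      = (n - k + 1) ^ 2 := by
    rw [numFactors, Finset.card_image_of_injOn hinj]
    simp [sq]
  refine ⟨hnum, ?_⟩
  have hmem : k ∈ Finset.Icc 1 (min n n) := by simp [hkn, hk]
  have hle := Finset.le_sup
    (f := fun t => (numFactors (fun i j => ((D i, D j) : Bool × Bool)) n n t t : ℚ≥0)
      / ((t * t : ℕ) : ℚ≥0)) hmem
  refine le_trans (le_of_eq ?_) hle
  simp only [hnum]
  push_cast
  ring_nf
end

section
/- For n ≥ 2, let M be the n×n binary 2D string with M[i][j] = 1 if (i = j and i ≤ n−1) or j = n, and M[i][j] = 0 otherwise (the (n−1)×(n−1) identity matrix with a row of 0's appended at the bottom and then a column of 1's appended at the right). Then P_M(k₁,k₂) ≤ 3(k₁+k₂) for all 1 ≤ k₁,k₂ ≤ n; hence δ(M) ≤ 6. -/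
/-- The identity matrix bordered below by `0`'s and on the right by `1`'s (0-based). -/
def idBordered (n : ℕ) : ℕ → ℕ → Bool :=
  fun i j => decide ((i = j ∧ i < n - 1) ∨ j = n - 1)

/-!
A `k₁ × k₂` factor of the bordered identity matrix is determined by three data: the diagonal
offset `i - j`, clamped to `[-k₁, k₂]` (beyond that range no diagonal `1` is visible), and
whether the factor touches the zero bottom row and the all-ones right column.  Touching the
bottom row forces the offset above `k₂ - k₁`, touching the right column forces it below, so only
`2 (k₁ + k₂ + 1) ≤ 3 (k₁ + k₂)` signatures occur.  Since `k₁ + k₂ ≤ 2 k₁ k₂`, this gives `δ ≤ 6`.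
-/

open Finset

section Factors

variable {α : Type*} [DecidableEq α]

theorem numFactors_le_card {β : Type*} {M : ℕ → ℕ → α} {m n k₁ k₂ : ℕ}
    (S : Finset β) (F : β → Fin k₁ → Fin k₂ → α)
    (hF : ∀ i j, i ≤ m - k₁ → j ≤ n - k₂ → ∃ s ∈ S, factorAt M k₁ k₂ i j = F s) :
    numFactors M m n k₁ k₂ ≤ #S := by
  refine (card_le_card (t := S.image F) fun x hx => ?_).trans card_image_le
  obtain ⟨⟨i, j⟩, hij, rfl⟩ := mem_image.mp hx
  simp only [mem_product, mem_range] at hij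
  obtain ⟨s, hs, hFs⟩ := hF i j (by omega) (by omega)
  exact mem_image.mpr ⟨s, hs, hFs.symm⟩

theorem deltaMeasure_le_of_numFactors_le {M : ℕ → ℕ → α} {m n c : ℕ}
    (h : ∀ k₁ k₂, 1 ≤ k₁ → k₁ ≤ m → 1 ≤ k₂ → k₂ ≤ n →
      numFactors M m n k₁ k₂ ≤ c * (k₁ + k₂)) :
    deltaMeasure M m n ≤ 2 * c := by
  refine Finset.sup_le fun ⟨k₁, k₂⟩ hk => ?_
  simp only [mem_product, mem_Icc] at hk
  obtain ⟨⟨hk₁, hk₁m⟩, hk₂, hk₂n⟩ := hk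
  have hpos : (0 : ℚ≥0) < ((k₁ * k₂ : ℕ) : ℚ≥0) := by positivity
  rw [div_le_iff₀ hpos]
  have hsum : k₁ + k₂ ≤ 2 * (k₁ * k₂) := by nlinarith
  have hle : numFactors M m n k₁ k₂ ≤ 2 * c * (k₁ * k₂) := calc
    numFactors M m n k₁ k₂ ≤ c * (k₁ + k₂) := h k₁ k₂ hk₁ hk₁m hk₂ hk₂n
    _ ≤ c * (2 * (k₁ * k₂)) := Nat.mul_le_mul_left c hsum
    _ = 2 * c * (k₁ * k₂) := by ring
  exact_mod_cast hle

end Factors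

/-- The `k₁ × k₂` factor with diagonal offset `d`, with a zero bottom row if `lastRow` and an
all-ones right column if `lastCol`; the signature is `(d, lastRow, lastCol)`. -/
def borderedDiagFactor (k₁ k₂ : ℕ) (s : ℤ × Bool × Bool) : Fin k₁ → Fin k₂ → Bool :=
  fun a b => decide (((b : ℤ) = a + s.1 ∧ (s.2.1 → (a : ℕ) ≠ k₁ - 1)
      ∧ (s.2.2 → (b : ℕ) ≠ k₂ - 1)) ∨ (s.2.2 ∧ (b : ℕ) = k₂ - 1))

noncomputable def borderedDiagSignatures (k₁ k₂ : ℕ) : Finset (ℤ × Bool × Bool) :=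
  (Icc (-(k₁ : ℤ)) k₂).image (fun d => (d, false, false))
  ∪ (Icc ((k₂ : ℤ) - k₁ + 1) k₂).image (fun d => (d, true, false))
  ∪ (Icc (-(k₁ : ℤ)) (k₂ - k₁ - 1)).image (fun d => (d, false, true))
  ∪ {((k₂ : ℤ) - k₁, true, true)}

theorem card_borderedDiagSignatures_le (k₁ k₂ : ℕ) :
    #(borderedDiagSignatures k₁ k₂) ≤ 2 * (k₁ + k₂ + 1) := by
  calc #(borderedDiagSignatures k₁ k₂)
      ≤ #(Icc (-(k₁ : ℤ)) k₂) + #(Icc ((k₂ : ℤ) - k₁ + 1) k₂)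
          + #(Icc (-(k₁ : ℤ)) (k₂ - k₁ - 1)) + #{((k₂ : ℤ) - k₁, true, true)} := by
        unfold borderedDiagSignatures
        grw [card_union_le, card_union_le, card_union_le, card_image_le, card_image_le,
          card_image_le]
    _ ≤ 2 * (k₁ + k₂ + 1) := by
        simp only [Int.card_Icc, card_singleton]
        omega

theorem exists_factorAt_idBordered_eq {n k₁ k₂ i j : ℕ} (hk₁ : 1 ≤ k₁) (hk₂ : 1 ≤ k₂)
    (hi : i + k₁ ≤ n) (hj : j + k₂ ≤ n) :
    ∃ s ∈ borderedDiagSignatures k₁ k₂,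
      factorAt (idBordered n) k₁ k₂ i j = borderedDiagFactor k₁ k₂ s := by
  refine ⟨(max (-(k₁ : ℤ)) (min (k₂ : ℤ) (i - j)), decide (i = n - k₁), decide (j = n - k₂)),
    ?_, ?_⟩
  · by_cases hr : i = n - k₁ <;> by_cases hc : j = n - k₂ <;>
      simp [borderedDiagSignatures, hr, hc] <;> omega
  · funext a b
    have := a.isLt
    have := b.isLt
    simp only [factorAt, idBordered, borderedDiagFactor, decide_eq_decide, decide_eq_true_eq]
    omega

theorem statement15_general (n : ℕ) :
    (∀ k₁ k₂, 1 ≤ k₁ → k₁ ≤ n → 1 ≤ k₂ → k₂ ≤ n →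
      numFactors (idBordered n) n n k₁ k₂ ≤ 3 * (k₁ + k₂)) ∧
    deltaMeasure (idBordered n) n n ≤ 6 := by
  have hP : ∀ k₁ k₂, 1 ≤ k₁ → k₁ ≤ n → 1 ≤ k₂ → k₂ ≤ n →
      numFactors (idBordered n) n n k₁ k₂ ≤ 3 * (k₁ + k₂) := by
    intro k₁ k₂ hk₁ hk₁n hk₂ hk₂n
    calc numFactors (idBordered n) n n k₁ k₂ ≤ #(borderedDiagSignatures k₁ k₂) :=
          numFactors_le_card _ _ fun i j hi hj =>
            exists_factorAt_idBordered_eq hk₁ hk₂ (by omega) (by omega)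
      _ ≤ 2 * (k₁ + k₂ + 1) := card_borderedDiagSignatures_le k₁ k₂
      _ ≤ 3 * (k₁ + k₂) := by omega
  exact ⟨hP, (deltaMeasure_le_of_numFactors_le hP).trans (by norm_num)⟩

theorem statement15 (n : ℕ) (hn : 2 ≤ n) :
    (∀ k₁ k₂, 1 ≤ k₁ → k₁ ≤ n → 1 ≤ k₂ → k₂ ≤ n →
      numFactors (idBordered n) n n k₁ k₂ ≤ 3 * (k₁ + k₂)) ∧
    deltaMeasure (idBordered n) n n ≤ 6 :=
  statement15_general n
end

section
/- For n ≥ 2, let M be the n×n binary 2D string with M[i][j] = 1 if (i = j and i ≤ n−1) or j = n, and M[i][j] = 0 otherwise. Then for every 0 ≤ k ≤ n−2 and every 0 ≤ i ≤ n−k−2, the binary string 0^i·1·0^k·1·0^{n−k−i−2} (of length n) occurs as a substring of rlin(M); these n(n−1)/2 strings are pairwise distinct, so rlin(M) has at least n(n−1)/2 distinct substrings of length n and δ(rlin(M)) ≥ (n−1)/2. -/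
/-!
Statement 16: For `n ≥ 2`, let `M` be the `n × n` binary 2D string with
`M[i][j] = 1` iff (`i = j` and `i < n−1`, 0-based) or `j = n−1`.  Then for every
`0 ≤ k ≤ n−2` and every `0 ≤ i ≤ n−k−2`, the binary string
`0^i · 1 · 0^k · 1 · 0^{n−k−i−2}` of length `n` (the string with `1` exactly at
positions `i` and `i+k+1`, 0-based) occurs as a substring of `rlin(M)`; these
`n(n−1)/2` strings are pairwise distinct, so `rlin(M)` has at least `n(n−1)/2`
distinct substrings of length `n`, and `δ(rlin(M)) ≥ (n−1)/2`.
-/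

/-- Row-major linearization of an `n`-column 2D string (0-based). -/
def rlin {α : Type*} (M : ℕ → ℕ → α) (n : ℕ) : ℕ → α :=
  fun t => M (t / n) (t % n)

/-- Number of distinct length-`len` substrings of the 1D string `S` of length `N`. -/
def numSubstr {α : Type*} [DecidableEq α] (S : ℕ → α) (N len : ℕ) : ℕ :=
  ((Finset.range (N - len + 1)).image (fun p => fun t : Fin len => S (p + t))).card

/-- `δ(S)` for a 1D string `S` of length `N`. -/
def delta1D {α : Type*} [DecidableEq α] (S : ℕ → α) (N : ℕ) : ℚ≥0 :=
  (Finset.Icc 1 N).sup (fun len => (numSubstr S N len : ℚ≥0) / ((len : ℕ) : ℚ≥0))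

/-!
Row `r < n - 1` of `idBordered n` has its ones at columns `r` and `n - 1`, while the next row
starts with `r + 1` zeros. So the length-`n` window of `rlin` starting `j ≤ r` columns before the
diagonal entry of row `r` has its ones exactly at positions `r - j` and `n - 1 - j`: every pair
`a < b < n` arises (take `r = n - 1 - (b - a)`, `j = r - a`), giving `n.choose 2` distinct
windows of length `n`; for `δ` take the term of its maximum at length `n`.
-/

open Finset

theorem rlin_mul_add {α : Type*} (M : ℕ → ℕ → α) {n c : ℕ} (hc : c < n) (r : ℕ) :
    rlin M n (r * n + c) = M r c := by
  rw [rlin, add_comm, Nat.add_mul_div_right _ _ (by omega), Nat.add_mul_mod_self_right,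
    Nat.div_eq_of_lt hc, Nat.mod_eq_of_lt hc, zero_add]

theorem rlin_mul_add_add {α : Type*} (M : ℕ → ℕ → α) {n j t : ℕ} (hj : j < n) (ht : t < n)
    (r : ℕ) :
    rlin M n (r * n + j + t) = if j + t < n then M r (j + t) else M (r + 1) (j + t - n) := by
  split_ifs with h
  · rw [add_assoc, rlin_mul_add M h]
  · rw [show r * n + j + t = (r + 1) * n + (j + t - n) by rw [add_mul]; omega,
      rlin_mul_add M (by omega)]

theorem exists_window_idBordered {n k i : ℕ} (hikn : i + k + 2 ≤ n) :
    ∃ p, p + n ≤ n * n ∧ ∀ t < n,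
      rlin (idBordered n) n (p + t) = decide (t = i ∨ t = i + k + 1) := by
  set r := n - k - 2
  refine ⟨r * n + (r - i), ?_, fun t ht => ?_⟩
  · calc r * n + (r - i) + n ≤ (r + 2) * n := by rw [add_mul]; omega
      _ ≤ n * n := Nat.mul_le_mul_right n (by omega)
  · rw [rlin_mul_add_add _ (by omega) ht]
    split_ifs <;> simp only [idBordered, decide_eq_decide] <;> omega

theorem eq_of_decide_pair_eq {n k i k' i' : ℕ} (hikn : i + k + 1 < n) (hikn' : i' + k' + 1 < n)
    (h : ∀ t < n, decide (t = i ∨ t = i + k + 1) = decide (t = i' ∨ t = i' + k' + 1)) :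
    k = k' ∧ i = i' := by
  simp only [decide_eq_decide] at h
  have := h i (by omega)
  have := h i' (by omega)
  have := h (i + k + 1) hikn
  have := h (i' + k' + 1) hikn'
  omega

theorem exists_window_idBordered_of_mem_powersetCard_two {n : ℕ} {s : Finset ℕ}
    (hs : s ∈ (range n).powersetCard 2) :
    ∃ p, p + n ≤ n * n ∧ ∀ t : Fin n, rlin (idBordered n) n (p + t) = decide ((t : ℕ) ∈ s) := by
  obtain ⟨hsub, hcard⟩ := mem_powersetCard.1 hs
  obtain ⟨a, b, hab, rfl⟩ := card_eq_two.1 hcard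
  wlog hlt : a < b generalizing a b
  · rw [pair_comm] at hs hsub ⊢
    exact this b a hab.symm hs hsub (card_pair hab.symm) (by omega)
  have hb : b < n := mem_range.1 (hsub (by simp))
  obtain ⟨p, hp, hwin⟩ := exists_window_idBordered (n := n) (k := b - a - 1) (i := a) (by omega)
  refine ⟨p, hp, fun t => ?_⟩
  rw [hwin t t.2, decide_eq_decide, mem_insert, mem_singleton]
  omega

theorem card_le_numSubstr {α ι : Type*} [DecidableEq α] {S : ℕ → α} {N len : ℕ}
    {s : Finset ι} (w : ι → Fin len → α) (hw : Set.InjOn w s)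
    (hocc : ∀ x ∈ s, ∃ p, p + len ≤ N ∧ ∀ t : Fin len, S (p + t) = w x t) :
    #s ≤ numSubstr S N len := by
  refine card_le_card_of_injOn w (fun x hx => ?_) hw
  obtain ⟨p, hp, hpw⟩ := hocc x hx
  simp only [coe_image, coe_range, Set.mem_image, Set.mem_Iio]
  exact ⟨p, by omega, funext hpw⟩

theorem injOn_decide_mem_of_subset_range (n : ℕ) :
    Set.InjOn (fun s (t : Fin n) => decide ((t : ℕ) ∈ s)) {s : Finset ℕ | s ⊆ range n} := by
  intro s hs s' hs' h
  ext x
  by_cases hx : x < n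
  · simpa using congrFun h ⟨x, hx⟩
  · exact iff_of_false (fun h' => hx (mem_range.1 (hs h'))) (fun h' => hx (mem_range.1 (hs' h')))

theorem choose_two_le_numSubstr_idBordered (n : ℕ) :
    n.choose 2 ≤ numSubstr (rlin (idBordered n) n) (n * n) n := by
  have h := card_le_numSubstr (S := rlin (idBordered n) n) (N := n * n)
    (s := (range n).powersetCard 2) _
    ((injOn_decide_mem_of_subset_range n).mono fun s hs => (mem_powersetCard.1 hs).1)
    (fun s hs => exists_window_idBordered_of_mem_powersetCard_two hs)
  rwa [card_powersetCard, card_range] at h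

theorem numSubstr_div_le_delta1D {α : Type*} [DecidableEq α] (S : ℕ → α) {N len : ℕ}
    (hlen : 1 ≤ len) (hlenN : len ≤ N) :
    (numSubstr S N len : ℚ≥0) / len ≤ delta1D S N :=
  le_sup (f := fun len => (numSubstr S N len : ℚ≥0) / (len : ℚ≥0)) (mem_Icc.2 ⟨hlen, hlenN⟩)

theorem statement16 (n : ℕ) (hn : 2 ≤ n) :
    (∀ k i, k ≤ n - 2 → i ≤ n - k - 2 →
      ∃ p, p + n ≤ n * n ∧
        ∀ t, t < n →
          rlin (idBordered n) n (p + t) = decide (t = i ∨ t = i + k + 1)) ∧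
    (∀ k i k' i', k ≤ n - 2 → i ≤ n - k - 2 → k' ≤ n - 2 → i' ≤ n - k' - 2 →
      (∀ t, t < n →
        (decide (t = i ∨ t = i + k + 1) : Bool) =
          decide (t = i' ∨ t = i' + k' + 1)) →
      k = k' ∧ i = i') ∧
    n * (n - 1) / 2 ≤ numSubstr (rlin (idBordered n) n) (n * n) n ∧
    ((n - 1 : ℕ) : ℚ≥0) / 2 ≤ delta1D (rlin (idBordered n) n) (n * n) := by
  have hcount : n * (n - 1) / 2 ≤ numSubstr (rlin (idBordered n) n) (n * n) n :=
    Nat.choose_two_right n ▸ choose_two_le_numSubstr_idBordered n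
  refine ⟨fun k i _ hi => exists_window_idBordered (by omega),
    fun k i k' i' _ hi _ hi' h => eq_of_decide_pair_eq (by omega) (by omega) h, hcount, ?_⟩
  refine le_trans ?_ (numSubstr_div_le_delta1D _ (by omega) (Nat.le_mul_self n))
  have hhalf := Nat.two_mul_div_two_of_even (Nat.even_mul_pred_self n)
  rw [div_le_div_iff₀ two_pos (by positivity)]
  exact_mod_cast (show (n - 1) * n ≤ numSubstr (rlin (idBordered n) n) (n * n) n * 2 by
    rw [mul_comm (n - 1)]; omega)
end

section
/- For all k ≥ 0, ds(I_{2^k}) = rs(I_{2^k}), where ds and rs are the down and right Peano–Hilbert scans and I_{2^k} is the 2^k × 2^k identity matrix over {0,1}. -/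
/-!
Statement 18: For all `k ≥ 0`, `ds(I_{2^k}) = rs(I_{2^k})`, where `ds` and `rs`
are the down and right Peano–Hilbert scans and `I_{2^k}` is the `2^k × 2^k`
identity matrix over `{0,1}` (with `true` playing the role of `1`).
-/


/-- The four Peano–Hilbert scans of a `2^k × 2^k` 2D string `M` (0-based entries),
returned as the tuple `(ls M, rs M, us M, ds M)` of 1D strings of length `4^k`. -/
def scans {α : Type*} : ℕ → (ℕ → ℕ → α) → (List α × List α × List α × List α)
  | 0, M => ([M 0 0], [M 0 0], [M 0 0], [M 0 0])
  | (k + 1), M =>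
      let UL : ℕ → ℕ → α := fun i j => M i j
      let UR : ℕ → ℕ → α := fun i j => M i (j + 2 ^ k)
      let LL : ℕ → ℕ → α := fun i j => M (i + 2 ^ k) j
      let LR : ℕ → ℕ → α := fun i j => M (i + 2 ^ k) (j + 2 ^ k)
      -- projections: `.1 = ls`, `.2.1 = rs`, `.2.2.1 = us`, `.2.2.2 = ds`
      ( (scans k LR).2.2.1 ++ (scans k LL).1 ++ (scans k UL).1 ++ (scans k UR).2.2.2,
        (scans k UL).2.2.2 ++ (scans k UR).2.1 ++ (scans k LR).2.1 ++ (scans k LL).2.2.1,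
        (scans k LR).1 ++ (scans k UR).2.2.1 ++ (scans k UL).2.2.1 ++ (scans k LL).2.1,
        (scans k UL).2.1 ++ (scans k LL).2.2.2 ++ (scans k LR).2.2.2 ++ (scans k UR).1 )

/-- The left scan `ls` of a `2^k × 2^k` 2D string. -/
def lsScan {α : Type*} (k : ℕ) (M : ℕ → ℕ → α) : List α := (scans k M).1

/-- The right scan `rs` of a `2^k × 2^k` 2D string. -/
def rsScan {α : Type*} (k : ℕ) (M : ℕ → ℕ → α) : List α := (scans k M).2.1

/-- The up scan `us` of a `2^k × 2^k` 2D string. -/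
def usScan {α : Type*} (k : ℕ) (M : ℕ → ℕ → α) : List α := (scans k M).2.2.1

/-- The down scan `ds` of a `2^k × 2^k` 2D string. -/
def dsScan {α : Type*} (k : ℕ) (M : ℕ → ℕ → α) : List α := (scans k M).2.2.2

theorem scans_transpose {α : Type*} : ∀ (k : ℕ) (M : ℕ → ℕ → α),
    scans k (fun i j => M j i) =
      ((scans k M).2.2.1, (scans k M).2.2.2, (scans k M).1, (scans k M).2.1) := by
  intro k
  induction k with
  | zero => intro M; rfl
  | succ k ih =>
    intro M
    simp only [scans]
    rw [ih M, ih (fun a b => M (a + 2 ^ k) b), ih (fun a b => M a (b + 2 ^ k)),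
        ih (fun a b => M (a + 2 ^ k) (b + 2 ^ k))]

theorem statement18 (k : ℕ) : dsScan k idMat = rsScan k idMat := by
  have h : (fun i j => idMat j i) = idMat := by
    funext i j
    simp [idMat, eq_comm]
  have := scans_transpose k idMat
  rw [h] at this
  simp only [dsScan, rsScan]
  conv_lhs => rw [this]
end

section
/- For all k ≥ 1, phlin(I_{2^k}) = phlin(I_{2^{k−1}}) · 0^{4^{k−1}} · phlin(I_{2^{k−1}}) · 0^{4^{k−1}}, where phlin is the Peano–Hilbert linearization (which on I_{2^k} equals both rs(I_{2^k}) and ds(I_{2^k})) and I_{2^k} is the 2^k × 2^k identity matrix; in particular phlin(I_2) = 1010. -/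
/-- The Peano–Hilbert linearization of a `2^k × 2^k` 2D string:
the right scan if `k` is odd, the down scan if `k` is even. -/
def phlin {α : Type*} (k : ℕ) (M : ℕ → ℕ → α) : List α :=
  if k % 2 = 1 then rsScan k M else dsScan k M

lemma scans_congr {α : Type*} : ∀ (k : ℕ) (M N : ℕ → ℕ → α),
    (∀ i j, i < 2 ^ k → j < 2 ^ k → M i j = N i j) → scans k M = scans k N
  | 0, M, N, h => by
      simp [scans, h 0 0 (by norm_num) (by norm_num)]
  | (k + 1), M, N, h => by
      have hp : 2 ^ k < 2 ^ (k + 1) := Nat.pow_lt_pow_succ (by norm_num)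
      have h1 : scans k (fun i j => M i j) = scans k (fun i j => N i j) :=
        scans_congr k _ _ (fun i j hi hj => h i j (hi.trans hp) (hj.trans hp))
      have h2 : scans k (fun i j => M i (j + 2 ^ k)) = scans k (fun i j => N i (j + 2 ^ k)) :=
        scans_congr k _ _ (fun i j hi hj => h i (j + 2 ^ k) (hi.trans hp) (by
          have : (2:ℕ) ^ (k+1) = 2 ^ k + 2 ^ k := by ring
          omega))
      have h3 : scans k (fun i j => M (i + 2 ^ k) j) = scans k (fun i j => N (i + 2 ^ k) j) :=
        scans_congr k _ _ (fun i j hi hj => h (i + 2 ^ k) j (by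
          have : (2:ℕ) ^ (k+1) = 2 ^ k + 2 ^ k := by ring
          omega) (hj.trans hp))
      have h4 : scans k (fun i j => M (i + 2 ^ k) (j + 2 ^ k))
          = scans k (fun i j => N (i + 2 ^ k) (j + 2 ^ k)) :=
        scans_congr k _ _ (fun i j hi hj => h (i + 2 ^ k) (j + 2 ^ k) (by
          have : (2:ℕ) ^ (k+1) = 2 ^ k + 2 ^ k := by ring
          omega) (by
          have : (2:ℕ) ^ (k+1) = 2 ^ k + 2 ^ k := by ring
          omega))
      simp only [scans, h1, h2, h3, h4]

lemma scans_zero : ∀ k : ℕ, scans k (fun _ _ => (false : Bool)) =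
    (List.replicate (4 ^ k) false, List.replicate (4 ^ k) false,
     List.replicate (4 ^ k) false, List.replicate (4 ^ k) false)
  | 0 => rfl
  | (k + 1) => by
      have h4 : (4:ℕ) ^ (k + 1) = 4 ^ k + (4 ^ k + (4 ^ k + 4 ^ k)) := by ring
      simp only [scans, scans_zero k, h4, List.replicate_add, List.append_assoc]

lemma scans_id_succ (k : ℕ) :
    rsScan (k + 1) idMat =
      dsScan k idMat ++ List.replicate (4 ^ k) false ++ rsScan k idMat
        ++ List.replicate (4 ^ k) false ∧
    dsScan (k + 1) idMat =
      rsScan k idMat ++ List.replicate (4 ^ k) false ++ dsScan k idMat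
        ++ List.replicate (4 ^ k) false := by
  have hUR : scans k (fun i j => idMat i (j + 2 ^ k)) = scans k (fun _ _ => (false : Bool)) :=
    scans_congr k _ _ (fun i j hi hj => by simp [idMat]; omega)
  have hLL : scans k (fun i j => idMat (i + 2 ^ k) j) = scans k (fun _ _ => (false : Bool)) :=
    scans_congr k _ _ (fun i j hi hj => by simp [idMat]; omega)
  have hLR : scans k (fun i j => idMat (i + 2 ^ k) (j + 2 ^ k)) = scans k idMat :=
    scans_congr k _ _ (fun i j hi hj => by simp [idMat])
  have hUL : scans k (fun i j => idMat i j) = scans k idMat := rfl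
  constructor <;>
    simp only [rsScan, dsScan, usScan, lsScan, scans, hUR, hLL, hLR, hUL, scans_zero k]

lemma rs_eq_ds : ∀ k : ℕ, rsScan k idMat = dsScan k idMat
  | 0 => rfl
  | (k + 1) => by
      obtain ⟨h1, h2⟩ := scans_id_succ k
      rw [h1, h2, rs_eq_ds k]

theorem statement19 (k : ℕ) (hk : 1 ≤ k) :
    phlin k idMat =
      phlin (k - 1) idMat ++ List.replicate (4 ^ (k - 1)) false ++
        phlin (k - 1) idMat ++ List.replicate (4 ^ (k - 1)) false ∧
    phlin 1 idMat = [true, false, true, false] := by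
  have key : ∀ m : ℕ, phlin m idMat = rsScan m idMat := by
    intro m
    unfold phlin
    split
    · rfl
    · exact (rs_eq_ds m).symm
  obtain ⟨m, rfl⟩ : ∃ m, k = m + 1 := ⟨k - 1, by omega⟩
  obtain ⟨h1, _⟩ := scans_id_succ m
  constructor
  · simp only [key, Nat.add_sub_cancel, h1, rs_eq_ds m]
  · simp [key, scans_id_succ 0]
    rfl
end
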